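/- arXiv:1902.07493 — 5 statements merged into one kernel-verified Lean document; each statement's English description precedes it below -/
import Mathlib

section
/- Assume the lattice is elliptic and that there exists a minimally elliptic cycle C, i.e. C ∈ L with C > 0, χ(C) = 0, and C ≤ D for every D ∈ L with D > 0 and χ(D) = 0. Then for every l ∈ L with l > 0 and χ(l) = 0, the support |l| is a connected subset of the dual graph and contains |C|. -/
open scoped BigOperators

/-- A negative definite lattice on the free ℤ-module with basis indexed by `V`,
realized inside the ℚ-vector space `V → ℚ`.  The basis vector `E_v` is `Pi.single v 1`,
the symmetric bilinear form `B` takes integer values on basis vectors, is negative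
definite, and has nonnegative off-diagonal entries. -/
structure LatticeData (V : Type*) [Fintype V] [DecidableEq V] where
  B : (V → ℚ) →ₗ[ℚ] (V → ℚ) →ₗ[ℚ] ℚ
  symm : ∀ x y, B x y = B y x
  int_basis : ∀ u v : V, ∃ n : ℤ, B (Pi.single u 1) (Pi.single v 1) = (n : ℚ)
  negdef : ∀ x : V → ℚ, x ≠ 0 → B x x < 0
  offdiag : ∀ u v : V, u ≠ v → (0 : ℚ) ≤ B (Pi.single u 1) (Pi.single v 1)

variable {V : Type*} [Fintype V] [DecidableEq V]

/-- The basis vector `E_v`. -/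
def Ev (v : V) : V → ℚ := Pi.single v 1

/-- `x` lies in the lattice `L` (has integral coefficients). -/
def inL (x : V → ℚ) : Prop := ∀ v, ∃ n : ℤ, x v = (n : ℚ)

/-- The support `|x|` of a cycle. -/
def supp (x : V → ℚ) : Set V := {v | x v ≠ 0}

/-- `x ∈ L'`, the dual lattice: all pairings with basis vectors are integers. -/
def inLd (D : LatticeData V) (x : V → ℚ) : Prop := ∀ v, ∃ n : ℤ, D.B x (Ev v) = (n : ℚ)

/-- `x ∈ S'`: the antinef cone of the dual lattice. -/
def inS' (D : LatticeData V) (x : V → ℚ) : Prop := inLd D x ∧ ∀ v, D.B x (Ev v) ≤ 0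

/-- The Riemann–Roch expression `χ(x) = -(x, x - Z_K)/2`. -/
def chi (D : LatticeData V) (ZK x : V → ℚ) : ℚ := -(D.B x (x - ZK)) / 2

/-- `ZK` is the (anti)canonical cycle: `(Z_K, E_v) = (E_v,E_v) + 2` for all `v`. -/
def IsCanonical (D : LatticeData V) (ZK : V → ℚ) : Prop :=
  ∀ v, D.B ZK (Ev v) = D.B (Ev v) (Ev v) + 2

/-- The lattice is minimal: all self-intersections are at most `-2`. -/
def IsMinimal (D : LatticeData V) : Prop := ∀ v : V, D.B (Ev v) (Ev v) ≤ -2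

/-- The lattice is elliptic: `χ(l) ≥ 0` for all `l ∈ L`, `l > 0`, with value 0 attained. -/
def Elliptic (D : LatticeData V) (ZK : V → ℚ) : Prop :=
  (∀ l : V → ℚ, inL l → 0 ≤ l → l ≠ 0 → 0 ≤ chi D ZK l) ∧
  (∃ l : V → ℚ, inL l ∧ 0 ≤ l ∧ l ≠ 0 ∧ chi D ZK l = 0)

/-- The dual graph: `u ≠ v` are adjacent iff `(E_u, E_v) > 0`. -/
def dualGraph (D : LatticeData V) : SimpleGraph V where
  Adj u v := u ≠ v ∧ 0 < D.B (Ev u) (Ev v)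
  symm := by
    constructor
    intro u v h
    exact ⟨h.1.symm, by rw [D.symm]; exact h.2⟩
  loopless := by
    constructor
    intro u h
    exact h.1 rfl

theorem test_preamble : True := trivial

/-!
If the support of `l` splits into two parts with no edges between them, then `l = l₁ + l₂` with
`(l₁, l₂) = 0`, so `χ(l₁) + χ(l₂) = χ(l) = 0`. Ellipticity forces `χ(l₁) = χ(l₂) = 0`, hence
`C ≤ l₁` and `C ≤ l₂` by minimality; as `l₁` and `l₂` have disjoint supports and `C ≥ 0`, this
gives `C = 0`, a contradiction. Containment `|C| ⊆ |l|` is immediate from `0 ≤ C ≤ l`.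
-/

theorem LinearMap.apply_apply_eq_zero_of_support {R n : Type*} [CommSemiring R] [Fintype n]
    [DecidableEq n] (B : (n → R) →ₗ[R] (n → R) →ₗ[R] R) {x y : n → R}
    (h : ∀ u ∈ Function.support x, ∀ v ∈ Function.support y,
      B (Pi.single u 1) (Pi.single v 1) = 0) :
    B x y = 0 := by
  rw [← Matrix.toLinearMap₂'_toMatrix' (R := R) B, Matrix.toLinearMap₂'_apply]
  refine Finset.sum_eq_zero fun u _ => Finset.sum_eq_zero fun v _ => ?_
  by_cases hu : x u = 0
  · simp [hu]
  by_cases hv : y v = 0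
  · simp [hv]
  simp [h u hu v hv]

theorem SimpleGraph.exists_separation_of_not_preconnected {V : Type*} {G : SimpleGraph V}
    {s : Set V} (h : ¬(G.induce s).Preconnected) :
    ∃ A : Set V, (s ∩ A).Nonempty ∧ (s ∩ Aᶜ).Nonempty ∧
      ∀ u ∈ s ∩ A, ∀ v ∈ s ∩ Aᶜ, ¬G.Adj u v := by
  simp only [SimpleGraph.Preconnected, not_forall] at h
  obtain ⟨a, b, hab⟩ := h
  refine ⟨{v | ∃ hv : v ∈ s, (G.induce s).Reachable a ⟨v, hv⟩}, ⟨a, a.2, a.2, .rfl⟩,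
    ⟨b, b.2, fun ⟨_, hr⟩ => hab hr⟩, ?_⟩
  rintro u ⟨hus, _, hr⟩ v ⟨hvs, hvA⟩ huv
  exact hvA ⟨hvs, hr.trans (SimpleGraph.Adj.reachable (G := G.induce s)
    (u := ⟨u, hus⟩) (v := ⟨v, hvs⟩) huv)⟩

omit [Fintype V] [DecidableEq V] in
theorem inL.indicator {l : V → ℚ} (hl : inL l) (A : Set V) : inL (A.indicator l) := by
  intro v
  by_cases hv : v ∈ A
  · simpa [Set.indicator_of_mem hv] using hl v
  · exact ⟨0, by simp [Set.indicator_of_notMem hv]⟩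

omit [Fintype V] [DecidableEq V] in
theorem inL.indicator_pos {l : V → ℚ} (hl : inL l) (hl0 : 0 ≤ l) {A : Set V}
    (hA : (supp l ∩ A).Nonempty) :
    inL (A.indicator l) ∧ 0 ≤ A.indicator l ∧ A.indicator l ≠ 0 := by
  obtain ⟨v, hvl, hvA⟩ := hA
  refine ⟨hl.indicator A, fun w => Set.indicator_nonneg (fun w _ => hl0 w) w, ?_⟩
  exact Function.ne_iff.mpr ⟨v, by rwa [Set.indicator_of_mem hvA]⟩

omit [Fintype V] [DecidableEq V] in
theorem supp_subset_of_le {C l : V → ℚ} (hC : 0 ≤ C) (hCl : C ≤ l) : supp C ⊆ supp l :=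
  fun v hv => ((lt_of_le_of_ne (hC v) (Ne.symm hv)).trans_le (hCl v)).ne'

omit [Fintype V] [DecidableEq V] in
theorem eq_zero_of_le_indicator_of_le_indicator_compl {C l : V → ℚ} {A : Set V} (hC : 0 ≤ C)
    (h₁ : C ≤ A.indicator l) (h₂ : C ≤ Aᶜ.indicator l) : C = 0 := by
  funext v
  refine le_antisymm ?_ (hC v)
  by_cases hv : v ∈ A
  · simpa [Set.indicator_of_notMem (Set.notMem_compl_iff.mpr hv)] using h₂ v
  · simpa [Set.indicator_of_notMem hv] using h₁ v

theorem LatticeData.B_Ev_eq_zero_of_not_adj (D : LatticeData V) {u v : V} (huv : u ≠ v)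
    (h : ¬(dualGraph D).Adj u v) : D.B (Ev u) (Ev v) = 0 :=
  le_antisymm (not_lt.mp fun hpos => h ⟨huv, hpos⟩) (D.offdiag u v huv)

theorem chi_add (D : LatticeData V) (ZK x y : V → ℚ) :
    chi D ZK (x + y) = chi D ZK x + chi D ZK y - D.B x y := by
  simp only [chi, map_add, map_sub, LinearMap.add_apply]
  linear_combination (-1 / 2 : ℚ) * D.symm y x

theorem LatticeData.B_indicator_indicator_compl_eq_zero (D : LatticeData V) (l : V → ℚ)
    {A : Set V} (hA : ∀ u ∈ supp l ∩ A, ∀ v ∈ supp l ∩ Aᶜ, ¬(dualGraph D).Adj u v) :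
    D.B (A.indicator l) (Aᶜ.indicator l) = 0 := by
  refine D.B.apply_apply_eq_zero_of_support fun u hu v hv => ?_
  rw [Function.mem_support, Set.indicator_apply_ne_zero] at hu hv
  exact D.B_Ev_eq_zero_of_not_adj (fun h => hv.1 (h ▸ hu.1))
    (hA u ⟨hu.2, hu.1⟩ v ⟨hv.2, hv.1⟩)

theorem chi_eq_zero_of_orthogonal_add (D : LatticeData V) (ZK : V → ℚ)
    (hχ : ∀ l : V → ℚ, inL l → 0 ≤ l → l ≠ 0 → 0 ≤ chi D ZK l) {l₁ l₂ : V → ℚ}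
    (hl₁ : inL l₁ ∧ 0 ≤ l₁ ∧ l₁ ≠ 0) (hl₂ : inL l₂ ∧ 0 ≤ l₂ ∧ l₂ ≠ 0)
    (hB : D.B l₁ l₂ = 0) (hsum : chi D ZK (l₁ + l₂) = 0) :
    chi D ZK l₁ = 0 ∧ chi D ZK l₂ = 0 := by
  have h₁ := hχ l₁ hl₁.1 hl₁.2.1 hl₁.2.2
  have h₂ := hχ l₂ hl₂.1 hl₂.2.1 hl₂.2.2
  rw [chi_add, hB] at hsum
  constructor <;> linarith

theorem statement1_general {V : Type*} [Fintype V] [DecidableEq V]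
    (D : LatticeData V) (ZK : V → ℚ)
    (hell : Elliptic D ZK)
    (C : V → ℚ) (hC0 : 0 ≤ C) (hCne : C ≠ 0)
    (hCmin : ∀ x : V → ℚ, inL x → 0 ≤ x → x ≠ 0 → chi D ZK x = 0 → C ≤ x) :
    ∀ l : V → ℚ, inL l → 0 ≤ l → l ≠ 0 → chi D ZK l = 0 →
      ((dualGraph D).induce (supp l)).Connected ∧ supp C ⊆ supp l := by
  intro l hlL hl0 hlne hlchi
  refine ⟨?_, supp_subset_of_le hC0 (hCmin l hlL hl0 hlne hlchi)⟩
  obtain ⟨v, hv⟩ := Function.ne_iff.mp hlne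
  have : Nonempty (supp l) := ⟨⟨v, hv⟩⟩
  refine ⟨?_⟩
  by_contra hpre
  obtain ⟨A, hA, hAc, hnadj⟩ := SimpleGraph.exists_separation_of_not_preconnected hpre
  have hl₁ := hlL.indicator_pos hl0 hA
  have hl₂ := hlL.indicator_pos hl0 hAc
  obtain ⟨hχ₁, hχ₂⟩ := chi_eq_zero_of_orthogonal_add D ZK hell.1 hl₁ hl₂
    (D.B_indicator_indicator_compl_eq_zero l hnadj)
    (by rwa [Set.indicator_self_add_compl])
  exact hCne (eq_zero_of_le_indicator_of_le_indicator_compl hC0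
    (hCmin _ hl₁.1 hl₁.2.1 hl₁.2.2 hχ₁) (hCmin _ hl₂.1 hl₂.2.1 hl₂.2.2 hχ₂))

/-- in an elliptic lattice admitting a minimally elliptic cycle `C`,
every `l ∈ L` with `l > 0` and `χ(l) = 0` has connected support (in the dual graph)
containing `|C|`. -/
theorem statement1 {V : Type*} [Fintype V] [DecidableEq V] [Nonempty V]
    (D : LatticeData V) (ZK : V → ℚ) (hZK : IsCanonical D ZK)
    (hell : Elliptic D ZK)
    (C : V → ℚ) (hCL : inL C) (hC0 : 0 ≤ C) (hCne : C ≠ 0) (hCchi : chi D ZK C = 0)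
    (hCmin : ∀ x : V → ℚ, inL x → 0 ≤ x → x ≠ 0 → chi D ZK x = 0 → C ≤ x) :
    ∀ l : V → ℚ, inL l → 0 ≤ l → l ≠ 0 → chi D ZK l = 0 →
      ((dualGraph D).induce (supp l)).Connected ∧ supp C ⊆ supp l :=
  statement1_general D ZK hell C hC0 hCne hCmin
end

section
/- Let w ∉ V, V' = V ∪ {w}, and consider a lattice on V' as in the context, in which the new basis vector E_w satisfies (E_w, E_v) = 1 for one fixed vertex v ∈ V and (E_w, E_u) = 0 for every u ∈ V∖{v}. Assume the lattice on V' is elliptic. Then every y ∈ L supported on V with y > 0 and χ(y) = 0 has E_v-coefficient at most 1; in particular, if the E_v-coefficient of such a y is at least 1 then it equals exactly 1. -/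
open scoped BigOperators

variable {V : Type*} [Fintype V] [DecidableEq V]

/-! Adding the new vertex to `y` costs `χ(y + E_w) = χ(y) + χ(E_w) - (y, E_w) = 0 + 1 - y_v`,
and ellipticity of the enlarged lattice forces this to be nonnegative. -/

theorem inL_add {ι : Type*} {x z : ι → ℚ} (hx : inL x) (hz : inL z) : inL (x + z) := by
  intro u
  obtain ⟨m, hm⟩ := hx u
  obtain ⟨n, hn⟩ := hz u
  exact ⟨m + n, by simp [hm, hn]⟩

theorem inL_Ev {ι : Type*} [DecidableEq ι] (w : ι) : inL (Ev w) := by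
  intro u
  by_cases hu : u = w
  · exact ⟨1, by simp [Ev, hu]⟩
  · exact ⟨0, by simp [Ev, hu]⟩

namespace LatticeData

variable (D : LatticeData V)

theorem apply_eq_sum (x y : V → ℚ) : D.B x y = ∑ u, y u * D.B x (Ev u) := by
  conv_lhs => rw [← Finset.univ_sum_single y]
  simp only [map_sum, Ev]
  refine Finset.sum_congr rfl fun u _ => ?_
  have hsingle : Pi.single u (y u) = y u • Pi.single u (1 : ℚ) := by
    rw [← Pi.single_smul, smul_eq_mul, mul_one]
  rw [hsingle, map_smul, smul_eq_mul]

theorem apply_Ev_of_leaf {w v : V} (hwu : ∀ u, u ≠ v → u ≠ w → D.B (Ev w) (Ev u) = 0)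
    {y : V → ℚ} (hyw : y w = 0) : D.B (Ev w) y = y v * D.B (Ev w) (Ev v) := by
  rw [apply_eq_sum, Finset.sum_eq_single v]
  · intro u _ huv
    by_cases huw : u = w
    · rw [huw, hyw, zero_mul]
    · rw [hwu u huv huw, mul_zero]
  · simp

theorem chi_add (ZK x z : V → ℚ) : chi D ZK (x + z) = chi D ZK x + chi D ZK z - D.B x z := by
  simp only [chi, map_add, map_sub, LinearMap.add_apply, D.symm z x]
  ring

theorem chi_Ev {ZK : V → ℚ} (hZK : IsCanonical D ZK) (u : V) : chi D ZK (Ev u) = 1 := by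
  simp only [chi, map_sub, D.symm (Ev u) ZK, hZK u]
  ring

end LatticeData

theorem statement2_general {V' : Type*} [Fintype V'] [DecidableEq V']
    (D : LatticeData V') (ZK : V' → ℚ) (hZK : IsCanonical D ZK)
    (w v : V')
    (hwv : D.B (Ev w) (Ev v) = 1)
    (hwu : ∀ u : V', u ≠ v → u ≠ w → D.B (Ev w) (Ev u) = 0)
    (hell : Elliptic D ZK) :
    ∀ y : V' → ℚ, inL y → y w = 0 → 0 ≤ y → y ≠ 0 → chi D ZK y = 0 →
      y v ≤ 1 ∧ (1 ≤ y v → y v = 1) := by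
  intro y hyL hyw hy0 _ hchi
  have hpair : D.B y (Ev w) = y v := by
    rw [D.symm, D.apply_Ev_of_leaf hwu hyw, hwv, mul_one]
  have hchi_add : chi D ZK (y + Ev w) = 1 - y v := by
    rw [D.chi_add, hchi, D.chi_Ev hZK, hpair, zero_add]
  have hpos : 0 ≤ y + Ev w := add_nonneg hy0 (by simp [Ev, Pi.single_nonneg])
  have hne : y + Ev w ≠ 0 := fun h => by
    simpa [Ev, hyw] using congr_fun h w
  have hnonneg : 0 ≤ 1 - y v := hchi_add ▸ hell.1 _ (inL_add hyL (inL_Ev w)) hpos hne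
  exact ⟨by linarith, fun _ => by linarith⟩

/-- let `V' = V ∪ {w}` and suppose the new basis vector `E_w` pairs to `1`
with `E_v` (for one fixed `v ≠ w`) and to `0` with all other basis vectors.  If the
lattice on `V'` is elliptic, then every `y ∈ L` supported on `V` (i.e. `y w = 0`) with
`y > 0` and `χ(y) = 0` has `E_v`-coefficient at most `1`; in particular if that
coefficient is at least `1` then it equals `1`. -/
theorem statement2 {V' : Type*} [Fintype V'] [DecidableEq V'] [Nonempty V']
    (D : LatticeData V') (ZK : V' → ℚ) (hZK : IsCanonical D ZK)
    (w v : V') (hvw : v ≠ w)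
    (hwv : D.B (Ev w) (Ev v) = 1)
    (hwu : ∀ u : V', u ≠ v → u ≠ w → D.B (Ev w) (Ev u) = 0)
    (hell : Elliptic D ZK) :
    ∀ y : V' → ℚ, inL y → y w = 0 → 0 ≤ y → y ≠ 0 → chi D ZK y = 0 →
      y v ≤ 1 ∧ (1 ≤ y v → y v = 1) :=
  statement2_general D ZK hZK w v hwv hwu hell
end

section
/- Assume the dual graph on V is a finite tree with at least two vertices and that (E_u,E_v) ∈ {0,1} for all u ≠ v (with value 1 exactly for adjacent pairs). Suppose Z_K ∈ L, every E_u-coefficient of Z_K is at least 1, and (Z_K,E_u) = (E_u,E_u)+2 for all u. If the E_v-coefficient of Z_K equals 1 for some vertex v, then v is an end-vertex (it has exactly one neighbour in the dual graph) and the Z_K-coefficient of that neighbour equals 2. -/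
open scoped BigOperators

variable {V : Type*} [Fintype V] [DecidableEq V]

/-!
At a vertex `w` with `Z_K`-coefficient `1`, the adjunction relation `(Z_K, E_w) = (E_w, E_w) + 2`
says that the coefficients of the neighbours of `w` sum to `2`. As all coefficients are at least
`1`, a vertex of coefficient `1` adjacent to another one has two neighbours of coefficient `1`;
the set of such vertices would then contain a cycle of the tree, so it is empty. Hence the
neighbours of `v` have coefficients `> 1` summing to `2`, which leaves room for only one of them,
of coefficient `2`.
-/

namespace SimpleGraph

variable {W : Type*} {G : SimpleGraph W}

theorem IsAcyclic.exists_subsingleton_neighborSet [Finite W] [Nonempty W] (hG : G.IsAcyclic) :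
    ∃ u, (G.neighborSet u).Subsingleton := by
  obtain ⟨u, v, p, hp, hlongest⟩ := Walk.exists_isPath_forall_isPath_length_le_length G
  refine ⟨u, fun w hw w' hw' => ?_⟩
  have on_path : ∀ x, G.Adj u x → x = p.snd := fun x hx => by
    refine hG.eq_snd_of_adj_start hp hx (by_contra fun hx' => ?_)
    have := hlongest _ _ _ (hp.cons (h := hx.symm) hx')
    simp at this
  exact (on_path w hw).trans (on_path w' hw').symm

theorem IsAcyclic.eq_empty_of_forall_exists_two_adj [Finite W] (hG : G.IsAcyclic) {s : Set W}
    (hs : ∀ u ∈ s, ∃ w ∈ s, ∃ w' ∈ s, w ≠ w' ∧ G.Adj u w ∧ G.Adj u w') : s = ∅ := by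
  by_contra hne
  have : Nonempty s := (Set.nonempty_iff_ne_empty.mpr hne).to_subtype
  obtain ⟨⟨u, hu⟩, hsub⟩ := (hG.induce s).exists_subsingleton_neighborSet
  obtain ⟨w, hw, w', hw', hne, hadj, hadj'⟩ := hs u hu
  exact hne (congrArg Subtype.val (hsub (show (G.induce s).Adj ⟨u, hu⟩ ⟨w, hw⟩ from hadj)
    (show (G.induce s).Adj ⟨u, hu⟩ ⟨w', hw'⟩ from hadj')))

end SimpleGraph

namespace LatticeData

variable {V : Type*} [Fintype V] [DecidableEq V] (D : LatticeData V)

instance : DecidableRel (dualGraph D).Adj :=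
  fun u v => inferInstanceAs (Decidable (u ≠ v ∧ 0 < D.B (Ev u) (Ev v)))

theorem B_Ev_eq_sum (x : V → ℚ) (w : V) : D.B x (Ev w) = ∑ u, x u * D.B (Ev u) (Ev w) := by
  have hx : x = ∑ u, x u • Ev u := by
    ext j
    simp [Ev, Pi.single_apply]
  conv_lhs => rw [hx]
  simp [map_sum]

theorem B_Ev_eq_add_sum_neighborFinset
    (h01 : ∀ u v : V, u ≠ v → D.B (Ev u) (Ev v) = 0 ∨ D.B (Ev u) (Ev v) = 1)
    (x : V → ℚ) (w : V) :
    D.B x (Ev w) = x w * D.B (Ev w) (Ev w) + ∑ u ∈ (dualGraph D).neighborFinset w, x u := by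
  have off_diag : ∀ u ∈ Finset.univ.erase w,
      x u * D.B (Ev u) (Ev w) = if (dualGraph D).Adj w u then x u else 0 := by
    intro u hu
    have hne := Finset.ne_of_mem_erase hu
    have hadj : (dualGraph D).Adj w u ↔ 0 < D.B (Ev u) (Ev w) := by
      simp [dualGraph, hne.symm, D.symm (Ev w)]
    rcases h01 u w hne with h | h <;> simp [hadj, h]
  rw [B_Ev_eq_sum, ← Finset.add_sum_erase _ _ (Finset.mem_univ w), Finset.sum_congr rfl off_diag,
    ← Finset.sum_filter, SimpleGraph.neighborFinset_eq_filter]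
  congr 2
  ext u
  simpa using fun h => ((dualGraph D).ne_of_adj h).symm

end LatticeData

namespace IsCanonical

variable {V : Type*} [Fintype V] [DecidableEq V] {D : LatticeData V} {ZK : V → ℚ}

theorem sum_neighborFinset_eq_two (hZK : IsCanonical D ZK)
    (h01 : ∀ u v : V, u ≠ v → D.B (Ev u) (Ev v) = 0 ∨ D.B (Ev u) (Ev v) = 1)
    {w : V} (hw : ZK w = 1) : ∑ u ∈ (dualGraph D).neighborFinset w, ZK u = 2 := by
  have h := D.B_Ev_eq_add_sum_neighborFinset h01 ZK w
  rw [hZK w, hw, one_mul] at h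
  linarith

theorem exists_adj_ne_eq_one (hZK : IsCanonical D ZK)
    (h01 : ∀ u v : V, u ≠ v → D.B (Ev u) (Ev v) = 0 ∨ D.B (Ev u) (Ev v) = 1)
    (hge : ∀ u, 1 ≤ ZK u) {w x : V} (hw : ZK w = 1) (hwx : (dualGraph D).Adj w x)
    (hx : ZK x = 1) : ∃ y, (dualGraph D).Adj w y ∧ y ≠ x ∧ ZK y = 1 := by
  set N := (dualGraph D).neighborFinset w
  have hxN : x ∈ N := by simpa [N] using hwx
  have hrest : ∑ u ∈ N.erase x, ZK u = 1 := by
    have := Finset.add_sum_erase N ZK hxN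
    rw [hZK.sum_neighborFinset_eq_two h01 hw, hx] at this
    linarith
  obtain ⟨y, hy⟩ : (N.erase x).Nonempty := by
    by_contra hempty
    rw [Finset.not_nonempty_iff_eq_empty.mp hempty, Finset.sum_empty] at hrest
    exact zero_ne_one hrest
  have hy_le : ZK y ≤ 1 :=
    hrest ▸ Finset.single_le_sum (fun u _ => zero_le_one.trans (hge u)) hy
  refine ⟨y, ?_, Finset.ne_of_mem_erase hy, le_antisymm hy_le (hge y)⟩
  simpa [N] using Finset.mem_of_mem_erase hy

theorem ne_one_of_adj (hZK : IsCanonical D ZK)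
    (h01 : ∀ u v : V, u ≠ v → D.B (Ev u) (Ev v) = 0 ∨ D.B (Ev u) (Ev v) = 1)
    (hge : ∀ u, 1 ≤ ZK u) (hacyc : (dualGraph D).IsAcyclic) {w x : V} (hw : ZK w = 1)
    (hwx : (dualGraph D).Adj w x) : ZK x ≠ 1 := by
  intro hx
  have hempty := hacyc.eq_empty_of_forall_exists_two_adj
    (s := {u | ZK u = 1 ∧ ∃ x, (dualGraph D).Adj u x ∧ ZK x = 1}) ?_
  · exact hempty.subset ⟨hw, x, hwx, hx⟩
  rintro u ⟨hu, z, huz, hz⟩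
  obtain ⟨y, huy, hyz, hy⟩ := hZK.exists_adj_ne_eq_one h01 hge hu huz hz
  exact ⟨z, ⟨hz, u, huz.symm, hu⟩, y, ⟨hy, u, huy.symm, hu⟩, hyz.symm, huz, huy⟩

end IsCanonical

theorem statement3_general {V : Type*} [Fintype V] [DecidableEq V]
    (D : LatticeData V) (ZK : V → ℚ)
    (htree : (dualGraph D).IsTree)
    (hcard : 1 < Fintype.card V)
    (h01 : ∀ u v : V, u ≠ v → D.B (Ev u) (Ev v) = 0 ∨ D.B (Ev u) (Ev v) = 1)
    (hZKge : ∀ u : V, 1 ≤ ZK u)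
    (hZK : IsCanonical D ZK)
    (v : V) (hv : ZK v = 1) :
    (∃! u : V, (dualGraph D).Adj v u) ∧ (∀ u : V, (dualGraph D).Adj v u → ZK u = 2) := by
  set G := dualGraph D
  have hsum := hZK.sum_neighborFinset_eq_two h01 hv
  have huniq : ∀ a b, G.Adj v a → G.Adj v b → a = b := by
    intro a b ha hb
    by_contra hab
    have hpair : ZK a + ZK b ≤ 2 := calc
      ZK a + ZK b = ∑ u ∈ {a, b}, ZK u := (Finset.sum_pair hab).symm
      _ ≤ ∑ u ∈ G.neighborFinset v, ZK u :=
        Finset.sum_le_sum_of_subset_of_nonneg (by simp [Finset.insert_subset_iff, ha, hb])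
          fun u _ _ => zero_le_one.trans (hZKge u)
      _ = 2 := hsum
    have hgt : ∀ u, G.Adj v u → 1 < ZK u := fun u hu =>
      (hZKge u).lt_of_ne (hZK.ne_one_of_adj h01 hZKge htree.isAcyclic hv hu).symm
    linarith [hgt a ha, hgt b hb]
  obtain ⟨u0, hu0⟩ := Fintype.exists_ne_of_one_lt_card hcard v
  obtain ⟨u, hu⟩ := (htree.connected.preconnected v u0).nonempty_neighborSet_left hu0.symm
  have hN : G.neighborFinset v = {u} := Finset.eq_singleton_iff_unique_mem.mpr
    ⟨by simpa using hu, fun b hb => huniq b u (by simpa using hb) hu⟩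
  rw [hN, Finset.sum_singleton] at hsum
  exact ⟨⟨u, hu, fun b hb => huniq b u hb hu⟩, fun b hb => huniq b u hb hu ▸ hsum⟩

/-- if the dual graph is a tree with at least two vertices, all off-diagonal
pairings lie in `{0,1}`, `Z_K ∈ L` with all coefficients at least `1` and satisfies the
adjunction relations, then any vertex `v` whose `Z_K`-coefficient equals `1` is an
end-vertex, and the `Z_K`-coefficient of its (unique) neighbour equals `2`. -/
theorem statement3 {V : Type*} [Fintype V] [DecidableEq V] [Nonempty V]
    (D : LatticeData V) (ZK : V → ℚ)
    (htree : (dualGraph D).IsTree)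
    (hcard : 1 < Fintype.card V)
    (h01 : ∀ u v : V, u ≠ v → D.B (Ev u) (Ev v) = 0 ∨ D.B (Ev u) (Ev v) = 1)
    (hZKL : inL ZK) (hZKge : ∀ u : V, 1 ≤ ZK u)
    (hZK : IsCanonical D ZK)
    (v : V) (hv : ZK v = 1) :
    (∃! u : V, (dualGraph D).Adj v u) ∧ (∀ u : V, (dualGraph D).Adj v u → ZK u = 2) :=
  statement3_general D ZK htree hcard h01 hZKge hZK v hv
end

section
/- Assume the lattice is minimal and elliptic and admits an elliptic sequence (s; B_0,…,B_m; Z_{B_0},…,Z_{B_m}) with associated cycles C_{−1} = s and C_t = s + ∑_{i=0}^{t} Z_{B_i}. If l' ∈ S' satisfies l' − Z_K ∈ L (l' lies in the class of Z_K) and l' ≤ Z_K, then l' = C_t for some −1 ≤ t ≤ m. -/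
open scoped BigOperators

variable {V : Type*} [Fintype V] [DecidableEq V]

/-- An elliptic sequence `(s; B_0 ⊇ ⋯ ⊇ B_m; Z_{B_0}, …, Z_{B_m})` for the lattice,
following the conventions of the paper: `s` is the minimal antinef representative
of the class of `Z_K` (`s = 0` when `Z_K ∈ L`), `Bset j` is the support `B_j`,
and `Z j` is the fundamental cycle `Z_{B_j}` of `B_j` (for `0 ≤ j ≤ m`). -/
structure EllSeq (D : LatticeData V) (ZK : V → ℚ) where
  s : V → ℚ
  m : ℕ
  Bset : ℕ → Set V
  Z : ℕ → (V → ℚ)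
  hs_S' : inS' D s
  hs_int : inL (ZK - s)
  hs_min : ∀ t : V → ℚ, inS' D t → inL (ZK - t) → s ≤ t
  hB0_not : ¬ inL ZK → Bset 0 = supp (ZK - s)
  hB0_in : inL ZK → Bset 0 = Set.univ
  hmono : ∀ j, j < m → Bset (j + 1) ⊆ Bset j
  hZ_int : ∀ j, j ≤ m → inL (Z j)
  hZ_pos : ∀ j, j ≤ m → 0 ≤ Z j ∧ Z j ≠ 0
  hZ_supp : ∀ j, j ≤ m → supp (Z j) ⊆ Bset j
  hZ_anti : ∀ j, j ≤ m → ∀ u ∈ Bset j, D.B (Z j) (Ev u) ≤ 0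
  hZ_min : ∀ j, j ≤ m → ∀ x : V → ℚ, inL x → 0 ≤ x → x ≠ 0 → supp x ⊆ Bset j →
      (∀ u ∈ Bset j, D.B x (Ev u) ≤ 0) → Z j ≤ x
  hBnext : ∀ j, j < m → Bset (j + 1) = supp (ZK - s - ∑ i ∈ Finset.range (j + 1), Z i)
  hsum : ZK = s + ∑ i ∈ Finset.range (m + 1), Z i


/-!
Write `C_t = s + Z_{B_0} + ⋯ + Z_{B_{t-1}}` and `T_t = Z_K - C_t = Z_{B_t} + ⋯ + Z_{B_m}`.
Minimality makes every `C_t` antinef, and ellipticity gives `0 ≤ χ(T_t) = (C_t, T_t)/2 ≤ 0`,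
so `C_t` is orthogonal to every `E_u` with `u ∈ B_t = |T_t|`. Hence if `C_t ≤ l' ≠ C_t`, the
difference `l' - C_t` is a positive cycle supported in `B_t` and antinef on `B_t`, so it dominates
the fundamental cycle `Z_{B_t}`, i.e. `C_{t+1} ≤ l'`. Starting from `s ≤ l'` (minimality of `s`)
and ending with `C_{m+1} = Z_K ≥ l'`, this forces `l'` to be one of the `C_t`.
-/

omit [Fintype V] [DecidableEq V] in
lemma inL_add_s4 {x y : V → ℚ} (hx : inL x) (hy : inL y) : inL (x + y) := fun v => by
  obtain ⟨a, ha⟩ := hx v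
  obtain ⟨b, hb⟩ := hy v
  exact ⟨a + b, by simp [ha, hb]⟩

omit [Fintype V] [DecidableEq V] in
lemma inL_neg {x : V → ℚ} (hx : inL x) : inL (-x) := fun v => by
  obtain ⟨a, ha⟩ := hx v
  exact ⟨-a, by simp [ha]⟩

omit [Fintype V] [DecidableEq V] in
lemma inL_sum {ι : Type*} (F : Finset ι) (f : ι → V → ℚ) (h : ∀ i ∈ F, inL (f i)) :
    inL (∑ i ∈ F, f i) :=
  Finset.sum_induction f inL (fun _ _ => inL_add_s4) (fun _ => ⟨0, by simp⟩) h

namespace LatticeData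

variable (D : LatticeData V)

lemma B_eq_sum_left (x y : V → ℚ) : D.B x y = ∑ v, x v * D.B (Ev v) y := by
  conv_lhs => rw [pi_eq_sum_univ' x]
  simp [Ev, map_sum, LinearMap.sum_apply]

lemma B_eq_sum_right (x y : V → ℚ) : D.B x y = ∑ v, y v * D.B x (Ev v) := by
  conv_lhs => rw [pi_eq_sum_univ' y]
  simp [Ev, map_sum]

lemma B_nonneg_of_mul_eq_zero {x y : V → ℚ} (hx : 0 ≤ x) (hy : 0 ≤ y)
    (hxy : ∀ v, x v * y v = 0) : 0 ≤ D.B x y := by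
  rw [B_eq_sum_left]
  refine Finset.sum_nonneg fun u _ => ?_
  rw [B_eq_sum_right, Finset.mul_sum]
  refine Finset.sum_nonneg fun v _ => ?_
  rcases eq_or_ne u v with rfl | huv
  · rw [← mul_assoc, hxy, zero_mul]
  · exact mul_nonneg (hx u) (mul_nonneg (hy v) (D.offdiag u v huv))

lemma B_Ev_nonneg_of_apply_eq_zero {x : V → ℚ} (hx : 0 ≤ x) {u : V} (hu : x u = 0) :
    0 ≤ D.B x (Ev u) :=
  D.B_nonneg_of_mul_eq_zero hx (Pi.single_nonneg.2 zero_le_one) fun v => by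
    rcases eq_or_ne v u with rfl | h
    · simp [hu]
    · simp [Ev, h]

theorem nonneg_of_antinef {s : V → ℚ} (hs : ∀ v, D.B s (Ev v) ≤ 0) : 0 ≤ s := by
  have hdisjoint : 0 ≤ D.B s⁻ s⁺ :=
    D.B_nonneg_of_mul_eq_zero (negPart_nonneg s) (posPart_nonneg s) fun v => by
      rcases le_total (s v) 0 with h | h <;> simp [h]
  have hpair : D.B s s⁻ ≤ 0 := by
    rw [B_eq_sum_right]
    exact Finset.sum_nonpos fun v _ => mul_nonpos_of_nonneg_of_nonpos (negPart_nonneg _) (hs v)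
  have hsplit : D.B s⁻ s = D.B s⁻ s⁺ - D.B s⁻ s⁻ := by
    rw [← map_sub, posPart_sub_negPart]
  have hsq : 0 ≤ D.B s⁻ s⁻ := by
    rw [D.symm] at hpair
    linarith
  have hneg : s⁻ = 0 := by
    by_contra h
    exact (D.negdef _ h).not_ge hsq
  exact negPart_eq_zero.1 hneg

end LatticeData

namespace EllSeq

variable {D : LatticeData V} {ZK : V → ℚ} (seq : EllSeq D ZK)

/-- The paper's `C_{t-1}`, shifted so that `seq.C 0 = s` and `seq.C (seq.m + 1) = Z_K`. -/
def C (t : ℕ) : V → ℚ := seq.s + ∑ i ∈ Finset.range t, seq.Z i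

def tail (t : ℕ) : V → ℚ := ∑ i ∈ Finset.Ico t (seq.m + 1), seq.Z i

lemma C_zero : seq.C 0 = seq.s := by simp [C]

lemma C_succ (t : ℕ) : seq.C (t + 1) = seq.C t + seq.Z t := by
  simp [C, Finset.sum_range_succ, add_assoc]

lemma C_m_add_one : seq.C (seq.m + 1) = ZK := seq.hsum.symm

lemma C_add_tail {t : ℕ} (ht : t ≤ seq.m + 1) : seq.C t + seq.tail t = ZK := by
  rw [C, tail, add_assoc, Finset.range_eq_Ico,
    Finset.sum_Ico_consecutive _ (Nat.zero_le t) ht, ← Finset.range_eq_Ico]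
  exact seq.hsum.symm

lemma tail_eq_sub {t : ℕ} (ht : t ≤ seq.m + 1) : seq.tail t = ZK - seq.C t :=
  eq_sub_of_add_eq' (seq.C_add_tail ht)

lemma tail_nonneg (t : ℕ) : 0 ≤ seq.tail t :=
  Finset.sum_nonneg fun i hi => (seq.hZ_pos i (Nat.lt_succ_iff.1 (Finset.mem_Ico.1 hi).2)).1

lemma inL_tail (t : ℕ) : inL (seq.tail t) :=
  inL_sum _ _ fun i hi => seq.hZ_int i (Nat.lt_succ_iff.1 (Finset.mem_Ico.1 hi).2)

lemma Z_le_tail {t : ℕ} (ht : t ≤ seq.m) : seq.Z t ≤ seq.tail t :=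
  Finset.single_le_sum (f := seq.Z)
    (fun i hi => (seq.hZ_pos i (Nat.lt_succ_iff.1 (Finset.mem_Ico.1 hi).2)).1)
    (Finset.mem_Ico.2 ⟨le_rfl, Nat.lt_succ_of_le ht⟩)

lemma tail_ne_zero {t : ℕ} (ht : t ≤ seq.m) : seq.tail t ≠ 0 := fun h =>
  (seq.hZ_pos t ht).2 (le_antisymm (h ▸ seq.Z_le_tail ht) (seq.hZ_pos t ht).1)

lemma Bset_subset_of_le {a b : ℕ} (hab : a ≤ b) (hb : b ≤ seq.m) : seq.Bset b ⊆ seq.Bset a := by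
  induction b, hab using Nat.le_induction with
  | base => exact subset_rfl
  | succ b _ ih => exact (seq.hmono b hb).trans (ih (Nat.le_of_succ_le hb))

lemma supp_tail_subset (t : ℕ) : supp (seq.tail t) ⊆ seq.Bset t := by
  intro v hv
  change seq.tail t v ≠ 0 at hv
  rw [tail, Finset.sum_apply] at hv
  obtain ⟨i, hi, hiv⟩ := Finset.exists_ne_zero_of_sum_ne_zero hv
  obtain ⟨hti, him⟩ := Finset.mem_Ico.1 hi
  exact seq.Bset_subset_of_le hti (Nat.lt_succ_iff.1 him) (seq.hZ_supp i (Nat.lt_succ_iff.1 him) hiv)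

lemma Bset_eq_supp_tail {t : ℕ} (ht : t ≤ seq.m) (h : t ≠ 0 ∨ ¬ inL ZK) :
    seq.Bset t = supp (seq.tail t) := by
  rcases t with _ | j
  · rw [seq.hB0_not (h.resolve_left (not_not.2 rfl)), seq.tail_eq_sub (Nat.zero_le _), C_zero]
  · rw [seq.hBnext j ht, seq.tail_eq_sub (Nat.le_succ_of_le ht), C, sub_add_eq_sub_sub]

lemma s_eq_zero_of_inL (hZKL : inL ZK) : seq.s = 0 :=
  le_antisymm (seq.hs_min 0 ⟨fun _ => ⟨0, by simp⟩, fun _ => by simp⟩ (by simpa using hZKL))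
    (D.nonneg_of_antinef seq.hs_S'.2)

lemma C_antinef (hZK : IsCanonical D ZK) (hmin : IsMinimal D) :
    ∀ {t : ℕ}, t ≤ seq.m → ∀ u, D.B (seq.C t) (Ev u) ≤ 0
  | 0, _, u => seq.C_zero ▸ seq.hs_S'.2 u
  | t + 1, ht, u => by
    by_cases hu : u ∈ seq.Bset t
    · rw [seq.C_succ, map_add, LinearMap.add_apply]
      linarith [C_antinef hZK hmin (Nat.le_of_succ_le ht) u, seq.hZ_anti t (Nat.le_of_succ_le ht) u hu]
    · -- off `B_t` the tail `T_{t+1}` vanishes at `u`, and `(Z_K, E_u) = (E_u, E_u) + 2 ≤ 0`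
      have hZKu : D.B ZK (Ev u) ≤ 0 := by linarith [hZK u, hmin u]
      have htail : 0 ≤ D.B (seq.tail (t + 1)) (Ev u) :=
        D.B_Ev_nonneg_of_apply_eq_zero (seq.tail_nonneg _) <| by_contra fun h =>
          hu (seq.hmono t ht (seq.supp_tail_subset _ h))
      rw [eq_sub_of_add_eq (seq.C_add_tail (Nat.le_succ_of_le ht)), map_sub,
        LinearMap.sub_apply]
      linarith

lemma B_C_Ev_eq_zero_of_tail_ne_zero (hZK : IsCanonical D ZK) (hmin : IsMinimal D)
    (hχ : ∀ l, inL l → 0 ≤ l → l ≠ 0 → 0 ≤ chi D ZK l) {t : ℕ} (ht : t ≤ seq.m) {u : V}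
    (hu : seq.tail t u ≠ 0) : D.B (seq.C t) (Ev u) = 0 := by
  have hterm : ∀ v ∈ Finset.univ, seq.tail t v * D.B (seq.C t) (Ev v) ≤ 0 := fun v _ =>
    mul_nonpos_of_nonneg_of_nonpos (seq.tail_nonneg t v) (seq.C_antinef hZK hmin ht v)
  have hchi : chi D ZK (seq.tail t) = D.B (seq.C t) (seq.tail t) / 2 := by
    rw [chi, seq.tail_eq_sub (Nat.le_succ_of_le ht), sub_sub_cancel_left, map_neg, D.symm]
    ring
  have hsum : ∑ v, seq.tail t v * D.B (seq.C t) (Ev v) = 0 := by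
    refine le_antisymm (Finset.sum_nonpos hterm) ?_
    have := hχ _ (seq.inL_tail t) (seq.tail_nonneg t) (seq.tail_ne_zero ht)
    rw [hchi, LatticeData.B_eq_sum_right] at this
    linarith
  exact (mul_eq_zero.1 ((Finset.sum_eq_zero_iff_of_nonpos hterm).1 hsum u
    (Finset.mem_univ u))).resolve_left hu

lemma B_C_Ev_eq_zero (hZK : IsCanonical D ZK) (hmin : IsMinimal D)
    (hχ : ∀ l, inL l → 0 ≤ l → l ≠ 0 → 0 ≤ chi D ZK l) {t : ℕ} (ht : t ≤ seq.m) {u : V}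
    (hu : u ∈ seq.Bset t) : D.B (seq.C t) (Ev u) = 0 := by
  by_cases h : t = 0 ∧ inL ZK
  · rw [h.1, C_zero, seq.s_eq_zero_of_inL h.2, map_zero, LinearMap.zero_apply]
  · rw [seq.Bset_eq_supp_tail ht (not_and_or.1 h)] at hu
    exact seq.B_C_Ev_eq_zero_of_tail_ne_zero hZK hmin hχ ht hu

lemma C_succ_le (hZK : IsCanonical D ZK) (hmin : IsMinimal D)
    (hχ : ∀ l, inL l → 0 ≤ l → l ≠ 0 → 0 ≤ chi D ZK l) {l' : V → ℚ}
    (hl'S : ∀ u, D.B l' (Ev u) ≤ 0) (hl'cl : inL (l' - ZK)) (hl'le : l' ≤ ZK)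
    {t : ℕ} (ht : t ≤ seq.m) (hle : seq.C t ≤ l') (hne : l' ≠ seq.C t) :
    seq.C (t + 1) ≤ l' := by
  have htail := seq.tail_eq_sub (Nat.le_succ_of_le ht)
  have hx_le : l' - seq.C t ≤ seq.tail t := htail ▸ sub_le_sub_right hl'le _
  have hx_inL : inL (l' - seq.C t) := by
    rw [← sub_add_sub_cancel l' ZK, ← htail]
    exact inL_add_s4 hl'cl (seq.inL_tail t)
  have hx_supp : supp (l' - seq.C t) ⊆ seq.Bset t := fun v hv =>
    seq.supp_tail_subset t (ne_of_gt (lt_of_lt_of_le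
      (lt_of_le_of_ne (sub_nonneg.2 hle v) (Ne.symm hv)) (hx_le v)))
  have hx_antinef : ∀ u ∈ seq.Bset t, D.B (l' - seq.C t) (Ev u) ≤ 0 := fun u hu => by
    rw [map_sub, LinearMap.sub_apply, seq.B_C_Ev_eq_zero hZK hmin hχ ht hu, sub_zero]
    exact hl'S u
  rw [seq.C_succ, ← le_sub_iff_add_le']
  exact seq.hZ_min t ht _ hx_inL (sub_nonneg.2 hle) (sub_ne_zero.2 hne) hx_supp hx_antinef

theorem exists_eq_C (hZK : IsCanonical D ZK) (hmin : IsMinimal D)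
    (hχ : ∀ l, inL l → 0 ≤ l → l ≠ 0 → 0 ≤ chi D ZK l) {l' : V → ℚ}
    (hl'S : inS' D l') (hl'cl : inL (l' - ZK)) (hl'le : l' ≤ ZK) :
    ∃ t ≤ seq.m + 1, l' = seq.C t := by
  have hs_le : seq.s ≤ l' := seq.hs_min l' hl'S (neg_sub l' ZK ▸ inL_neg hl'cl)
  have hclimb : ∀ t ≤ seq.m + 1, seq.C t ≤ l' ∨ ∃ t' ≤ seq.m + 1, l' = seq.C t' := by
    intro t
    induction t with
    | zero => exact fun _ => Or.inl (seq.C_zero ▸ hs_le)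
    | succ t ih =>
      intro ht
      rcases ih (Nat.le_of_succ_le ht) with hle | hfound
      · by_cases hne : l' = seq.C t
        · exact Or.inr ⟨t, Nat.le_of_succ_le ht, hne⟩
        · exact Or.inl (seq.C_succ_le hZK hmin hχ hl'S.2 hl'cl hl'le (Nat.le_of_succ_le_succ ht) hle hne)
      · exact Or.inr hfound
  rcases hclimb (seq.m + 1) le_rfl with hle | hfound
  · exact ⟨seq.m + 1, le_rfl, le_antisymm (by rwa [seq.C_m_add_one]) hle⟩
  · exact hfound

end EllSeq

theorem statement4_general {V : Type*} [Fintype V] [DecidableEq V]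
    (D : LatticeData V) (ZK : V → ℚ) (hZK : IsCanonical D ZK)
    (hmin : IsMinimal D) (hell : Elliptic D ZK)
    (seq : EllSeq D ZK)
    (l' : V → ℚ) (hl'S : inS' D l') (hl'cl : inL (l' - ZK)) (hl'le : l' ≤ ZK) :
    ∃ t ≤ seq.m + 1, l' = seq.s + ∑ i ∈ Finset.range t, seq.Z i :=
  seq.exists_eq_C hZK hmin hell.1 hl'S hl'cl hl'le

/-- for a minimal elliptic lattice with an elliptic sequence, with
`C_{-1} = s` and `C_t = s + ∑_{i ≤ t} Z_{B_i}`: every `l' ∈ S'` in the class of `Z_K`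
(i.e. `l' - Z_K ∈ L`) with `l' ≤ Z_K` equals `C_t` for some `-1 ≤ t ≤ m`
(here `t` ranges over `0, …, m + 1` in the shifted indexing `C_{t-1} = s + ∑_{i < t} Z_i`). -/
theorem statement4 {V : Type*} [Fintype V] [DecidableEq V] [Nonempty V]
    (D : LatticeData V) (ZK : V → ℚ) (hZK : IsCanonical D ZK)
    (hmin : IsMinimal D) (hell : Elliptic D ZK)
    (seq : EllSeq D ZK)
    (l' : V → ℚ) (hl'S : inS' D l') (hl'cl : inL (l' - ZK)) (hl'le : l' ≤ ZK) :
    ∃ t ≤ seq.m + 1, l' = seq.s + ∑ i ∈ Finset.range t, seq.Z i :=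
  statement4_general D ZK hZK hmin hell seq l' hl'S hl'cl hl'le
end

section
/- Assume the lattice is minimal and Z_K ∉ L, and let s ∈ S' be such that Z_K − s ∈ L and s ≤ t for every t ∈ S' with Z_K − t ∈ L (the minimal antinef representative of the class of Z_K). If Z ∈ L satisfies Z > 0 and (Z, E_v) = (E_v,E_v)+2 for every v ∈ |Z| (its support carries a numerically Gorenstein subgraph with canonical cycle Z), then Z ≤ Z_K − s; in particular |Z| ⊆ |Z_K − s|. -/
open scoped BigOperators

variable {V : Type*} [Fintype V] [DecidableEq V]

namespace LatticeData

variable (D : LatticeData V)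

theorem B_ev_eq_sum (x : V → ℚ) (v : V) :
    D.B x (Ev v) = ∑ u, x u * D.B (Ev u) (Ev v) := by
  have hx : x = ∑ u, x u • Ev u := by
    funext w
    simp [Ev, Pi.single_apply, Finset.sum_apply]
  conv_lhs => rw [hx]
  simp only [map_sum, map_smul, LinearMap.sum_apply, LinearMap.smul_apply, smul_eq_mul]

theorem inLd_of_inL {x : V → ℚ} (hx : inL x) : inLd D x := by
  intro v
  choose m hm using hx
  choose k hk using fun u => D.int_basis u v
  refine ⟨∑ u, m u * k u, ?_⟩
  rw [B_ev_eq_sum]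
  simp only [Ev, hm, hk, Int.cast_sum, Int.cast_mul]

theorem B_ev_nonneg_of_notMem_supp {x : V → ℚ} (hx : 0 ≤ x) {v : V} (hv : v ∉ supp x) :
    0 ≤ D.B x (Ev v) := by
  rw [B_ev_eq_sum]
  refine Finset.sum_nonneg fun u _ => ?_
  by_cases huv : u = v
  · simp [huv, show x v = 0 from not_not.mp hv]
  · exact mul_nonneg (hx u) (D.offdiag u v huv)

/-- On `|Z|` the pairing vanishes; off `|Z|`, minimality gives `(Z_K, E_v) ≤ 0`
while `(Z, E_v) ≥ 0`. -/
theorem inS'_canonical_sub (hmin : IsMinimal D) {ZK Z : V → ℚ} (hZK : IsCanonical D ZK)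
    (hZL : inL Z) (hZ0 : 0 ≤ Z)
    (hcan : ∀ v ∈ supp Z, D.B Z (Ev v) = D.B (Ev v) (Ev v) + 2) :
    inS' D (ZK - Z) := by
  have hsub (v : V) : D.B (ZK - Z) (Ev v) = D.B ZK (Ev v) - D.B Z (Ev v) := by
    simp only [map_sub, LinearMap.sub_apply]
  refine ⟨fun v => ?_, fun v => ?_⟩
  · obtain ⟨n, hn⟩ := D.int_basis v v
    obtain ⟨m, hm⟩ := D.inLd_of_inL hZL v
    refine ⟨n + 2 - m, ?_⟩
    rw [hsub, hZK v, hm, Ev, hn]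
    push_cast
    ring
  · by_cases hv : v ∈ supp Z
    · rw [hsub, hZK v, hcan v hv, sub_self]
    · linarith [hsub v, hZK v, hmin v, D.B_ev_nonneg_of_notMem_supp hZ0 hv]

end LatticeData

theorem supp_subset_of_le_s7 {ι : Type*} {x y : ι → ℚ} (hx : 0 ≤ x) (hxy : x ≤ y) : supp x ⊆ supp y :=
  fun v hv => ((lt_of_le_of_ne (hx v) (Ne.symm hv)).trans_le (hxy v)).ne'

theorem statement7_general {V : Type*} [Fintype V] [DecidableEq V]
    (D : LatticeData V) (ZK : V → ℚ) (hZK : IsCanonical D ZK)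
    (hmin : IsMinimal D)
    (s : V → ℚ)
    (hsmin : ∀ t : V → ℚ, inS' D t → inL (ZK - t) → s ≤ t)
    (Z : V → ℚ) (hZL : inL Z) (hZ0 : 0 ≤ Z)
    (hcan : ∀ v ∈ supp Z, D.B Z (Ev v) = D.B (Ev v) (Ev v) + 2) :
    Z ≤ ZK - s ∧ supp Z ⊆ supp (ZK - s) := by
  have hs_le : s ≤ ZK - Z :=
    hsmin _ (D.inS'_canonical_sub hmin hZK hZL hZ0 hcan) (by rwa [sub_sub_cancel])
  have hZ_le : Z ≤ ZK - s := le_sub_comm.mp hs_le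
  exact ⟨hZ_le, supp_subset_of_le_s7 hZ0 hZ_le⟩

/-- in a minimal lattice with `Z_K ∉ L`, with `s` the minimal antinef
representative of the class of `Z_K`: if `Z ∈ L`, `Z > 0`, and `(Z, E_v) = (E_v,E_v)+2`
for every `v ∈ |Z|`, then `Z ≤ Z_K - s`; in particular `|Z| ⊆ |Z_K - s|`. -/
theorem statement7 {V : Type*} [Fintype V] [DecidableEq V] [Nonempty V]
    (D : LatticeData V) (ZK : V → ℚ) (hZK : IsCanonical D ZK)
    (hmin : IsMinimal D) (hnotL : ¬ inL ZK)
    (s : V → ℚ) (hsS : inS' D s) (hsL : inL (ZK - s))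
    (hsmin : ∀ t : V → ℚ, inS' D t → inL (ZK - t) → s ≤ t)
    (Z : V → ℚ) (hZL : inL Z) (hZ0 : 0 ≤ Z) (hZne : Z ≠ 0)
    (hcan : ∀ v ∈ supp Z, D.B Z (Ev v) = D.B (Ev v) (Ev v) + 2) :
    Z ≤ ZK - s ∧ supp Z ⊆ supp (ZK - s) :=
  statement7_general D ZK hZK hmin s hsmin Z hZL hZ0 hcan
end
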